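/- arXiv:2411.17836 — 2 statements merged into one kernel-verified Lean document; each statement's English description precedes it below -/
import Mathlib

section
/- Let p = (t+1)/(t²+1) + i(t-1)/(t²+1) and z = 2/(t+1) in ℂ, for 0 < t < 1. Then (z - p)/Im(p) = (t-1)/(t+1) - i, and the condition Im(p + (z-p)e^{-t·(7π/4)}e^{-i·(7π/4)}) = 0 is equivalent to √2·e^{-(7π/4)t} = 1 + t. -/
open Complex

theorem lozi_tangency_condition_t0 (t : ℝ) (ht0 : 0 < t) (ht1 : t < 1) :
    let p : ℂ := ((t + 1) / (t ^ 2 + 1) : ℝ) + ((t - 1) / (t ^ 2 + 1) : ℝ) * I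
    let z : ℂ := ((2 / (t + 1) : ℝ) : ℂ)
    (z - p) / (p.im : ℂ) = ((t - 1) / (t + 1) : ℝ) - I ∧
    ((p + (z - p) * Complex.exp (-(t * (7 * Real.pi / 4)) : ℝ) *
        Complex.exp (-I * ((7 * Real.pi / 4 : ℝ) : ℂ))).im = 0 ↔
      Real.sqrt 2 * Real.exp (-(7 * Real.pi / 4) * t) = 1 + t) := by
  intro p z
  have hq : (0:ℝ) < t ^ 2 + 1 := by positivity
  have hne : t ^ 2 + 1 ≠ 0 := ne_of_gt hq
  have hne1 : t + 1 ≠ 0 := by linarith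
  have him : p.im = (t - 1) / (t ^ 2 + 1) := by
    simp only [p, Complex.add_im, Complex.mul_im, Complex.ofReal_re, Complex.ofReal_im,
      Complex.I_re, Complex.I_im]
    ring
  have himne : p.im ≠ 0 := by
    rw [him]; exact div_ne_zero (by linarith) hne
  have himneC : (p.im : ℂ) ≠ 0 := by exact_mod_cast himne
  have hc : Real.cos (7 * Real.pi / 4) = Real.sqrt 2 / 2 := by
    rw [show (7 * Real.pi / 4) = -(Real.pi / 4) + 2 * Real.pi by ring,
      Real.cos_add_two_pi, Real.cos_neg, Real.cos_pi_div_four]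
  have hs : Real.sin (7 * Real.pi / 4) = -(Real.sqrt 2 / 2) := by
    rw [show (7 * Real.pi / 4) = -(Real.pi / 4) + 2 * Real.pi by ring,
      Real.sin_add_two_pi, Real.sin_neg, Real.sin_pi_div_four]
  have hexp : Complex.exp (-I * ((7 * Real.pi / 4 : ℝ) : ℂ)) =
      ((Real.sqrt 2 / 2 : ℝ) : ℂ) + ((Real.sqrt 2 / 2 : ℝ) : ℂ) * I := by
    rw [show -I * ((7 * Real.pi / 4 : ℝ) : ℂ) = ((-(7 * Real.pi / 4) : ℝ) : ℂ) * I by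
        push_cast; ring,
      Complex.exp_mul_I, ← Complex.ofReal_cos, ← Complex.ofReal_sin,
      Real.cos_neg, Real.sin_neg, hc, hs]
    push_cast
    ring
  constructor
  · rw [div_eq_iff himneC, him]
    apply Complex.ext <;>
      simp only [p, z, Complex.sub_re, Complex.sub_im, Complex.add_re, Complex.add_im,
        Complex.mul_re, Complex.mul_im, Complex.ofReal_re, Complex.ofReal_im,
        Complex.I_re, Complex.I_im] <;>
      field_simp <;> ring
  · have key : (p + (z - p) * Complex.exp (-(t * (7 * Real.pi / 4)) : ℝ) *
        Complex.exp (-I * ((7 * Real.pi / 4 : ℝ) : ℂ))).im =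
        (t - 1) / (t ^ 2 + 1) *
          (1 - Real.sqrt 2 * Real.exp (-(7 * Real.pi / 4) * t) / (t + 1)) := by
      rw [hexp, show (Complex.exp ((-(t * (7 * Real.pi / 4)) : ℝ) : ℂ)) =
          ((Real.exp (-(7 * Real.pi / 4) * t) : ℝ) : ℂ) by
        rw [← Complex.ofReal_exp]; norm_num; ring_nf]
      simp only [p, z, Complex.sub_re, Complex.sub_im, Complex.add_re, Complex.add_im,
        Complex.mul_re, Complex.mul_im, Complex.ofReal_re, Complex.ofReal_im,
        Complex.I_re, Complex.I_im]
      have h2 : Real.sqrt 2 * Real.sqrt 2 = 2 := Real.mul_self_sqrt (by norm_num)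
      field_simp
      ring
    rw [key, mul_eq_zero, or_iff_right (div_ne_zero (by linarith) hne), sub_eq_zero,
      eq_comm, div_eq_one_iff_eq hne1]
    constructor <;> intro h <;> linarith
end

section
/- Suppose 0 < b < 1 and a = 1 - b. Then every point of the segment I = { (x, y) : bx + y = b/(1-b), 0 ≤ x ≤ 1/(1-b) } satisfies L_{a,b}²(x,y) = (x,y), i.e., I consists of period-two (or fixed) points of the Lozi map, and the fixed point X = (1/(2(1-b)), b/(2(1-b))) is the midpoint of I. -/
/-- The Lozi map `L_{a,b}(x,y) = (1 + y - a|x|, b x)`. -/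
def lozi (a b : ℝ) (p : ℝ × ℝ) : ℝ × ℝ := (1 + p.2 - a * |p.1|, b * p.1)

theorem lozi_segment_period_two (b : ℝ) (hb0 : 0 < b) (hb1 : b < 1) :
    (∀ p : ℝ × ℝ, b * p.1 + p.2 = b / (1 - b) → 0 ≤ p.1 → p.1 ≤ 1 / (1 - b) →
      lozi (1 - b) b (lozi (1 - b) b p) = p) ∧
    ((1 / (2 * (1 - b)), b / (2 * (1 - b))) : ℝ × ℝ) =
      midpoint ℝ ((0, b / (1 - b)) : ℝ × ℝ) ((1 / (1 - b), 0) : ℝ × ℝ) := by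
  have hb : (0:ℝ) < 1 - b := by linarith
  constructor
  · rintro ⟨x, y⟩ hline hx0 hx1
    simp only [lozi]
    have habs : |x| = x := abs_of_nonneg hx0
    have hy : y = b / (1 - b) - b * x := by linarith [hline]
    have h1 : 1 + y - (1 - b) * |x| = 1 / (1 - b) - x := by
      rw [habs, hy]
      field_simp
      ring
    rw [h1]
    have h1nn : (0:ℝ) ≤ 1 / (1 - b) - x := by linarith
    rw [abs_of_nonneg h1nn]
    have hbx : b * (1 / (1 - b)) = b / (1 - b) := by ring
    refine Prod.ext ?_ ?_
    · simp only
      field_simp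
      ring
    · simp only
      rw [hy]
      field_simp
  · rw [midpoint_eq_smul_add]
    refine Prod.ext ?_ ?_ <;> simp <;> field_simp <;> ring
end
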